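/- arXiv:1012.4183 — 3 statements merged into one kernel-verified Lean document; each statement's English description precedes it below -/
import Mathlib

section
/- Let X₀,…,X_T be real random variables such that for each t there are constants A ≥ 1 and B_t > 0 with P(|X_t| > ε) ≤ A·exp(−B_t ε) for all ε > 0. Let B be the harmonic mean of the B_t, i.e. B = ((T+1)^{-1} ∑_{t=0}^T B_t^{-1})^{-1}. Then for every 0 < γ < 1 and ε > 0, P(|∑_{t=0}^T X_t| > ε) ≤ (A/(1−γ))·exp(−γ B ε/(T+1)). -/
open MeasureTheory ProbabilityTheory Real Finset
open scoped Nat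

/-!
By Chernoff's bound it suffices to show `E exp(λ|S|) ≤ A / (1 - γ)` for `S = ∑ X_t` and
`λ = γ B / (T + 1)`. Integrating the tail bound gives `‖X_t‖_q ≤ (A q!)^(1/q) / B_t`; the constant
`(A q!)^(1/q)` does not depend on `t`, so Minkowski's inequality yields
`E|S|^q ≤ A q! (∑ 1/B_t)^q = A q! ((T + 1) / B)^q`. Expanding the exponential termwise then gives
`E exp(λ|S|) ≤ A ∑ γ^q = A / (1 - γ)`.
-/

section

variable {Ω : Type*} [MeasurableSpace Ω] {μ : Measure Ω}

theorem lintegral_abs_rpow_le_of_measure_lt_abs_le {Y : Ω → ℝ} (hY : AEMeasurable Y μ)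
    {A b : ℝ} (hA : 0 ≤ A) (hb : 0 < b)
    (htail : ∀ s : ℝ, 0 < s → μ {ω | s < |Y ω|} ≤ ENNReal.ofReal (A * exp (-b * s)))
    {p : ℝ} (hp : 0 < p) :
    ∫⁻ ω, ENNReal.ofReal (|Y ω| ^ p) ∂μ ≤
      ENNReal.ofReal (A * Gamma (p + 1) / b ^ p) := by
  have hint : IntegrableOn (fun t : ℝ => A * (t ^ (p - 1) * exp (-b * t))) (Set.Ioi 0) := by
    have h := integrableOn_rpow_mul_exp_neg_mul_rpow (p := 1) (s := p - 1) (by linarith)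
      one_pos hb
    simp only [rpow_one] at h
    exact h.const_mul A
  have hlayer : ∫⁻ t in Set.Ioi 0, μ {ω | t < |Y ω|} * ENNReal.ofReal (t ^ (p - 1))
      ≤ ∫⁻ t in Set.Ioi 0, ENNReal.ofReal (A * (t ^ (p - 1) * exp (-b * t))) := by
    refine setLIntegral_mono' measurableSet_Ioi fun t (ht : 0 < t) => ?_
    calc μ {ω | t < |Y ω|} * ENNReal.ofReal (t ^ (p - 1))
        ≤ ENNReal.ofReal (A * exp (-b * t)) * ENNReal.ofReal (t ^ (p - 1)) := by
          gcongr; exact htail t ht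
      _ = ENNReal.ofReal (A * (t ^ (p - 1) * exp (-b * t))) := by
          rw [← ENNReal.ofReal_mul (by positivity)]; ring_nf
  have hGamma :
      ∫ t in Set.Ioi 0, A * (t ^ (p - 1) * exp (-b * t)) = A * (1 / b) ^ p * Gamma p := by
    simp only [neg_mul, integral_const_mul, integral_rpow_mul_exp_neg_mul_Ioi hp hb, mul_assoc]
  rw [lintegral_rpow_eq_lintegral_meas_lt_mul μ (ae_of_all _ fun ω => abs_nonneg _) hY.abs hp]
  calc ENNReal.ofReal p * ∫⁻ t in Set.Ioi 0, μ {ω | t < |Y ω|} * ENNReal.ofReal (t ^ (p - 1))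
      ≤ ENNReal.ofReal p * ENNReal.ofReal (A * (1 / b) ^ p * Gamma p) := by
        rw [← hGamma, ofReal_integral_eq_lintegral_ofReal hint
          (ae_restrict_of_forall_mem measurableSet_Ioi fun t (ht : 0 < t) => by positivity)]
        gcongr
    _ = ENNReal.ofReal (A * Gamma (p + 1) / b ^ p) := by
        rw [← ENNReal.ofReal_mul hp.le, Gamma_add_one hp.ne', div_rpow zero_le_one hb.le,
          one_rpow]
        ring_nf

theorem lintegral_abs_pow_le_of_measure_lt_abs_le {Y : Ω → ℝ} (hY : AEMeasurable Y μ)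
    {A b : ℝ} (hA : 0 ≤ A) (hb : 0 < b)
    (htail : ∀ s : ℝ, 0 < s → μ {ω | s < |Y ω|} ≤ ENNReal.ofReal (A * exp (-b * s)))
    {n : ℕ} (hn : n ≠ 0) :
    ∫⁻ ω, ENNReal.ofReal (|Y ω| ^ n) ∂μ ≤ ENNReal.ofReal (A * n ! * b⁻¹ ^ n) := by
  have h := lintegral_abs_rpow_le_of_measure_lt_abs_le hY hA hb htail
    (p := n) (Nat.cast_pos.2 (Nat.pos_of_ne_zero hn))
  simpa only [rpow_natCast, Gamma_nat_eq_factorial, div_eq_mul_inv, inv_pow] using h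

theorem lintegral_ofReal_abs_pow_eq_eLpNorm_pow (f : Ω → ℝ) {n : ℕ} (hn : n ≠ 0) :
    ∫⁻ ω, ENNReal.ofReal (|f ω| ^ n) ∂μ = eLpNorm f n μ ^ n := by
  rw [eLpNorm_eq_lintegral_rpow_enorm_toReal (by exact_mod_cast hn) (ENNReal.natCast_ne_top n),
    ENNReal.toReal_natCast, one_div, ENNReal.rpow_inv_natCast_pow hn]
  refine lintegral_congr fun ω => ?_
  rw [Real.enorm_eq_ofReal_abs, ENNReal.rpow_natCast, ENNReal.ofReal_pow (abs_nonneg _)]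

theorem lintegral_abs_sum_pow_le {ι : Type*} (s : Finset ι) {f : ι → Ω → ℝ}
    (hf : ∀ i ∈ s, AEStronglyMeasurable (f i) μ) {n : ℕ} (hn : n ≠ 0) {C : ℝ} {c : ι → ℝ}
    (hc : ∀ i ∈ s, 0 ≤ c i)
    (hmom : ∀ i ∈ s, ∫⁻ ω, ENNReal.ofReal (|f i ω| ^ n) ∂μ ≤ ENNReal.ofReal (C * c i ^ n)) :
    ∫⁻ ω, ENNReal.ofReal (|∑ i ∈ s, f i ω| ^ n) ∂μ ≤
      ENNReal.ofReal (C * (∑ i ∈ s, c i) ^ n) := by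
  set K := ENNReal.ofReal C ^ (n⁻¹ : ℝ)
  have hK : K ^ n = ENNReal.ofReal C := ENNReal.rpow_inv_natCast_pow hn _
  have hbound : ∀ {x : ℝ}, 0 ≤ x → ENNReal.ofReal (C * x ^ n) = (K * ENNReal.ofReal x) ^ n :=
    fun hx => by rw [mul_pow, hK, ENNReal.ofReal_mul' (pow_nonneg hx n), ENNReal.ofReal_pow hx]
  have hnorm : ∀ i ∈ s, eLpNorm (f i) n μ ≤ K * ENNReal.ofReal (c i) := fun i hi => by
    rw [← ENNReal.pow_le_pow_left_iff hn,
      ← lintegral_ofReal_abs_pow_eq_eLpNorm_pow _ hn, ← hbound (hc i hi)]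
    exact hmom i hi
  have hsum : (fun ω => ∑ i ∈ s, f i ω) = ∑ i ∈ s, f i := by ext; simp
  rw [lintegral_ofReal_abs_pow_eq_eLpNorm_pow _ hn, hbound (sum_nonneg hc), hsum,
    ENNReal.ofReal_sum_of_nonneg hc, mul_sum]
  gcongr
  exact (eLpNorm_sum_le hf (by exact_mod_cast Nat.one_le_iff_ne_zero.2 hn)).trans
    (sum_le_sum hnorm)

theorem measure_lt_le_exp_mul_lintegral_exp {Y : Ω → ℝ} (hY : AEMeasurable Y μ) {l : ℝ}
    (hl : 0 ≤ l) (ε : ℝ) :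
    μ {ω | ε < Y ω} ≤
      ENNReal.ofReal (exp (-(l * ε))) * ∫⁻ ω, ENNReal.ofReal (exp (l * Y ω)) ∂μ := by
  have hpos : ENNReal.ofReal (exp (l * ε)) ≠ 0 := (ENNReal.ofReal_pos.2 (exp_pos _)).ne'
  calc μ {ω | ε < Y ω}
      ≤ μ {ω | ENNReal.ofReal (exp (l * ε)) ≤ ENNReal.ofReal (exp (l * Y ω))} :=
        measure_mono <| Set.ofPred_subset_ofPred.2 fun ω hω => by gcongr
    _ ≤ (∫⁻ ω, ENNReal.ofReal (exp (l * Y ω)) ∂μ) / ENNReal.ofReal (exp (l * ε)) :=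
        meas_ge_le_lintegral_div (by fun_prop) hpos ENNReal.ofReal_ne_top
    _ = _ := by
        rw [ENNReal.div_eq_inv_mul, ← ENNReal.ofReal_inv_of_pos (exp_pos _), exp_neg]

theorem ofReal_exp_eq_tsum {x : ℝ} (hx : 0 ≤ x) :
    ENNReal.ofReal (exp x) = ∑' n : ℕ, ENNReal.ofReal (x ^ n / n !) := by
  rw [exp_eq_exp_ℝ, NormedSpace.exp_eq_tsum_div]
  exact ENNReal.ofReal_tsum_of_nonneg (fun n => by positivity) (summable_pow_div_factorial x)

theorem lintegral_exp_mul_abs_le {Y : Ω → ℝ} (hY : AEMeasurable Y μ) {A R l : ℝ}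
    (hA : 0 ≤ A) (hR : 0 ≤ R) (hl : 0 ≤ l) (hlR : l * R < 1)
    (hmom : ∀ n : ℕ,
      ∫⁻ ω, ENNReal.ofReal (|Y ω| ^ n) ∂μ ≤ ENNReal.ofReal (A * n ! * R ^ n)) :
    ∫⁻ ω, ENNReal.ofReal (exp (l * |Y ω|)) ∂μ ≤ ENNReal.ofReal (A / (1 - l * R)) := by
  have hterm : ∀ (n : ℕ) ω, ENNReal.ofReal ((l * |Y ω|) ^ n / n !) =
      ENNReal.ofReal (l ^ n / n !) * ENNReal.ofReal (|Y ω| ^ n) := fun n ω => by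
    rw [← ENNReal.ofReal_mul (by positivity), mul_pow, mul_div_right_comm]
  calc ∫⁻ ω, ENNReal.ofReal (exp (l * |Y ω|)) ∂μ
      = ∑' n : ℕ, ENNReal.ofReal (l ^ n / n !) * ∫⁻ ω, ENNReal.ofReal (|Y ω| ^ n) ∂μ := by
        simp_rw [ofReal_exp_eq_tsum (mul_nonneg hl (abs_nonneg _)), hterm]
        rw [lintegral_tsum fun n => by fun_prop]
        exact tsum_congr fun n => lintegral_const_mul' _ _ ENNReal.ofReal_ne_top
    _ ≤ ∑' n : ℕ, ENNReal.ofReal (l ^ n / n !) * ENNReal.ofReal (A * n ! * R ^ n) := by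
        gcongr with n; exact hmom n
    _ = ∑' n : ℕ, ENNReal.ofReal (A * (l * R) ^ n) := tsum_congr fun n => by
        rw [← ENNReal.ofReal_mul (by positivity)]
        congr 1
        field_simp
        ring
    _ = ENNReal.ofReal (A / (1 - l * R)) := by
        have hgeom := summable_geometric_of_lt_one (mul_nonneg hl hR) hlR
        rw [← ENNReal.ofReal_tsum_of_nonneg (fun n => by positivity) (hgeom.mul_left A),
          tsum_mul_left, tsum_geometric_of_lt_one (mul_nonneg hl hR) hlR, div_eq_mul_inv]

end

theorem sum_exponential_tail_general
    {Ω : Type*} [MeasurableSpace Ω] (μ : Measure Ω) [IsProbabilityMeasure μ]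
    (T : ℕ) (X : Fin (T + 1) → Ω → ℝ) (hX : ∀ t, Measurable (X t))
    (A : ℝ) (hA : 1 ≤ A) (B : Fin (T + 1) → ℝ) (hB : ∀ t, 0 < B t)
    (htail : ∀ t, ∀ ε : ℝ, 0 < ε →
      μ {ω | ε < |X t ω|} ≤ ENNReal.ofReal (A * Real.exp (-(B t) * ε)))
    (Bh : ℝ) (hBh : Bh = (((T + 1 : ℝ))⁻¹ * ∑ t, (B t)⁻¹)⁻¹)
    (γ ε : ℝ) (hγ0 : 0 < γ) (hγ1 : γ < 1) :
    μ {ω | ε < |∑ t, X t ω|} ≤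
      ENNReal.ofReal (A / (1 - γ) * Real.exp (-(γ * Bh * ε) / (T + 1))) := by
  set R := ∑ t, (B t)⁻¹
  have hR : 0 < R := sum_pos (fun t _ => inv_pos.2 (hB t)) univ_nonempty
  have hBh0 : 0 < Bh := hBh ▸ inv_pos.2 (mul_pos (by positivity) hR)
  set l := γ * Bh / (T + 1) with hl_def
  have hl : 0 ≤ l := by positivity
  have hlR : l * R = γ := by simp only [l, hBh]; field_simp
  have hmom : ∀ n : ℕ, ∫⁻ ω, ENNReal.ofReal (|∑ t, X t ω| ^ n) ∂μ ≤
      ENNReal.ofReal (A * n ! * R ^ n) := by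
    intro n
    rcases eq_or_ne n 0 with rfl | hn
    · simpa using hA -- `E |S|^0 = μ univ = 1`
    · exact lintegral_abs_sum_pow_le univ (fun t _ => (hX t).aestronglyMeasurable) hn
        (fun t _ => (inv_pos.2 (hB t)).le) fun t _ =>
          lintegral_abs_pow_le_of_measure_lt_abs_le (hX t).aemeasurable (by linarith) (hB t)
            (htail t) hn
  have hS : AEMeasurable (fun ω => ∑ t, X t ω) μ := by fun_prop
  calc μ {ω | ε < |∑ t, X t ω|}
      ≤ ENNReal.ofReal (exp (-(l * ε))) *
          ∫⁻ ω, ENNReal.ofReal (exp (l * |∑ t, X t ω|)) ∂μ :=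
        measure_lt_le_exp_mul_lintegral_exp hS.abs hl ε
    _ ≤ ENNReal.ofReal (exp (-(l * ε))) * ENNReal.ofReal (A / (1 - l * R)) := by
        gcongr
        exact lintegral_exp_mul_abs_le hS (by linarith) hR.le hl (by linarith) hmom
    _ = ENNReal.ofReal (A / (1 - γ) * Real.exp (-(γ * Bh * ε) / (T + 1))) := by
        rw [← ENNReal.ofReal_mul (exp_pos _).le, hlR, hl_def]
        ring_nf

/-- Sum of exponential-tail random variables: if
`P(|X_t| > ε) ≤ A exp(−B_t ε)` for all `ε > 0`, and `B` is the harmonic mean of the `B_t`,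
then `P(|∑ X_t| > ε) ≤ (A/(1−γ)) exp(−γ B ε/(T+1))` for all `0 < γ < 1`, `ε > 0`. -/
theorem sum_exponential_tail
    {Ω : Type*} [MeasurableSpace Ω] (μ : Measure Ω) [IsProbabilityMeasure μ]
    (T : ℕ) (X : Fin (T + 1) → Ω → ℝ) (hX : ∀ t, Measurable (X t))
    (A : ℝ) (hA : 1 ≤ A) (B : Fin (T + 1) → ℝ) (hB : ∀ t, 0 < B t)
    (htail : ∀ t, ∀ ε : ℝ, 0 < ε →
      μ {ω | ε < |X t ω|} ≤ ENNReal.ofReal (A * Real.exp (-(B t) * ε)))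
    (Bh : ℝ) (hBh : Bh = (((T + 1 : ℝ))⁻¹ * ∑ t, (B t)⁻¹)⁻¹)
    (γ ε : ℝ) (hγ0 : 0 < γ) (hγ1 : γ < 1) (hε : 0 < ε) :
    μ {ω | ε < |∑ t, X t ω|} ≤
      ENNReal.ofReal (A / (1 - γ) * Real.exp (-(γ * Bh * ε) / (T + 1))) :=
  sum_exponential_tail_general μ T X hX A hA B hB htail Bh hBh γ ε hγ0 hγ1
end

section
/- Let ρ ∈ [0,1), r ≥ 0 an integer, and nonnegative reals {c_s}_{s=r}^T. Then for every t, (∑_{s=r}^T ρ^{max(t−s,s−r−t,0)} c_s)² ≤ K(1+r)·∑_{s=r}^T ρ^{max(t−s,s−r−t,0)} c_s², where K depends only on ρ. Consequently, ∑_{t=0}^{T} (∑_{s=r}^T ρ^{max(t−s,s−r−t,0)} c_s)² ≤ K'(1+r)² ∑_{s=r}^T c_s² with K' depending only on ρ. -/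
open Finset

private lemma geom_sum_injOn_le (ρ : ℝ) (hρ0 : 0 ≤ ρ) (hρ1 : ρ < 1) (S : Finset ℕ) (e : ℕ → ℕ)
    (he : Set.InjOn e S) : ∑ x ∈ S, ρ ^ e x ≤ 1 / (1 - ρ) := by
  calc ∑ x ∈ S, ρ ^ e x = ∑ k ∈ S.image e, ρ ^ k :=
        (Finset.sum_image (fun x hx y hy h => he hx hy h)).symm
    _ ≤ ∑' k : ℕ, ρ ^ k :=
        Summable.sum_le_tsum _ (fun k _ => pow_nonneg hρ0 k)
          (summable_geometric_of_lt_one hρ0 hρ1)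
    _ = (1 - ρ)⁻¹ := tsum_geometric_of_lt_one hρ0 hρ1
    _ = 1 / (1 - ρ) := (one_div _).symm

private lemma window_sum_le (ρ : ℝ) (hρ0 : 0 ≤ ρ) (hρ1 : ρ < 1) (u v : ℕ) (huv : u ≤ v)
    (A : Finset ℕ) :
    ∑ x ∈ A, ρ ^ (max (u - x) (x - v)) ≤ (v : ℝ) - u + 1 + 2 / (1 - ρ) := by
  classical
  have h1 : (0:ℝ) < 1 - ρ := by linarith
  rw [← Finset.sum_filter_add_sum_filter_not A (fun x => x < u),
      ← Finset.sum_filter_add_sum_filter_not (A.filter (fun x => ¬ x < u)) (fun x => x ≤ v)]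
  have hS1 : ∑ x ∈ A.filter (fun x => x < u), ρ ^ (max (u - x) (x - v)) ≤ 1 / (1 - ρ) := by
    apply geom_sum_injOn_le ρ hρ0 hρ1
    intro x hx y hy hxy
    simp only [Finset.coe_filter, Set.mem_setOf_eq] at hx hy
    have hxy2 : max (u - x) (x - v) = max (u - y) (y - v) := hxy
    omega
  have hS3 : ∑ x ∈ (A.filter (fun x => ¬ x < u)).filter (fun x => ¬ x ≤ v),
      ρ ^ (max (u - x) (x - v)) ≤ 1 / (1 - ρ) := by
    apply geom_sum_injOn_le ρ hρ0 hρ1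
    intro x hx y hy hxy
    simp only [Finset.coe_filter, Set.mem_setOf_eq] at hx hy
    have hxy2 : max (u - x) (x - v) = max (u - y) (y - v) := hxy
    omega
  have hS2 : ∑ x ∈ (A.filter (fun x => ¬ x < u)).filter (fun x => x ≤ v),
      ρ ^ (max (u - x) (x - v)) ≤ (v : ℝ) - u + 1 := by
    have hval : ∀ x ∈ (A.filter (fun x => ¬ x < u)).filter (fun x => x ≤ v),
        ρ ^ (max (u - x) (x - v)) = 1 := by
      intro x hx
      simp only [Finset.mem_filter] at hx
      have : max (u - x) (x - v) = 0 := by omega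
      simp [this]
    rw [Finset.sum_congr rfl hval, Finset.sum_const, nsmul_eq_mul, mul_one]
    have hsub : (A.filter (fun x => ¬ x < u)).filter (fun x => x ≤ v) ⊆ Finset.Icc u v := by
      intro x hx
      simp only [Finset.mem_filter] at hx
      simp only [Finset.mem_Icc]
      omega
    have hcard := Finset.card_le_card hsub
    rw [Nat.card_Icc] at hcard
    have : ((((A.filter (fun x => ¬ x < u)).filter (fun x => x ≤ v)).card : ℝ))
        ≤ ((v + 1 - u : ℕ) : ℝ) := by exact_mod_cast hcard
    refine this.trans ?_
    have : ((v + 1 - u : ℕ) : ℝ) = (v : ℝ) + 1 - u := by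
      have : u ≤ v + 1 := by omega
      push_cast [this]
      ring
    rw [this]; ring_nf; linarith
  have h2 : 2 / (1 - ρ) = 1 / (1 - ρ) + 1 / (1 - ρ) := by ring
  linarith

/-- Cauchy–Schwarz with geometric weights:
`(∑_s ρ^{max(t−s,s−r−t,0)} c_s)² ≤ K(1+r) ∑_s ρ^{max(t−s,s−r−t,0)} c_s²` and
`∑_{t=0}^{T} (∑_s ρ^{max(t−s,s−r−t,0)} c_s)² ≤ K'(1+r)² ∑_s c_s²`. -/
theorem geometric_window_cauchy_schwarz (ρ : ℝ) (hρ0 : 0 ≤ ρ) (hρ1 : ρ < 1) :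
    ∃ K K' : ℝ, 0 < K ∧ 0 < K' ∧
      ∀ (r T : ℕ) (c : ℕ → ℝ), (∀ s, 0 ≤ c s) →
        (∀ t : ℕ,
          (∑ s ∈ Finset.Icc r T, ρ ^ (max (t - s) (s - r - t)) * c s) ^ 2 ≤
            K * (1 + r : ℝ) * ∑ s ∈ Finset.Icc r T, ρ ^ (max (t - s) (s - r - t)) * c s ^ 2)
        ∧ ∑ t ∈ Finset.range (T + 1),
            (∑ s ∈ Finset.Icc r T, ρ ^ (max (t - s) (s - r - t)) * c s) ^ 2 ≤
          K' * (1 + r : ℝ) ^ 2 * ∑ s ∈ Finset.Icc r T, c s ^ 2 := by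
  have h1 : (0:ℝ) < 1 - ρ := by linarith
  set K : ℝ := 1 + 2 / (1 - ρ) with hKdef
  have hK : 0 < K := by positivity
  refine ⟨K, K ^ 2, hK, by positivity, ?_⟩
  intro r T c hc
  have hw0 : ∀ t s : ℕ, 0 ≤ ρ ^ (max (t - s) (s - r - t)) := fun t s => pow_nonneg hρ0 _
  -- row sums
  have hrow : ∀ t : ℕ, ∑ s ∈ Finset.Icc r T, ρ ^ (max (t - s) (s - r - t)) ≤ K * (1 + r) := by
    intro t
    have h := window_sum_le ρ hρ0 hρ1 t (r + t) (by omega) (Finset.Icc r T)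
    have heq : ∑ s ∈ Finset.Icc r T, ρ ^ (max (t - s) (s - r - t))
        = ∑ s ∈ Finset.Icc r T, ρ ^ (max (t - s) (s - (r + t))) := by
      refine Finset.sum_congr rfl fun s _ => ?_
      rw [Nat.sub_sub]
    rw [heq]
    refine h.trans ?_
    have h2 : 0 ≤ (r : ℝ) * (1 - ρ)⁻¹ * 2 := by positivity
    push_cast
    rw [hKdef]
    ring_nf
    linarith
  -- column sums
  have hcol : ∀ s : ℕ, r ≤ s →
      ∑ t ∈ Finset.range (T + 1), ρ ^ (max (t - s) (s - r - t)) ≤ K * (1 + r) := by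
    intro s hs
    have h := window_sum_le ρ hρ0 hρ1 (s - r) s (Nat.sub_le s r) (Finset.range (T + 1))
    have heq : ∑ t ∈ Finset.range (T + 1), ρ ^ (max (t - s) (s - r - t))
        = ∑ t ∈ Finset.range (T + 1), ρ ^ (max (s - r - t) (t - s)) := by
      refine Finset.sum_congr rfl fun t _ => ?_
      rw [max_comm]
    rw [heq]
    refine h.trans ?_
    have hcast : ((s - r : ℕ) : ℝ) = (s : ℝ) - r := by
      push_cast [hs]; ring
    rw [hcast]
    have h2 : 0 ≤ (r : ℝ) * (1 - ρ)⁻¹ * 2 := by positivity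
    rw [hKdef]
    ring_nf
    linarith
  -- Cauchy–Schwarz per row
  have key : ∀ t : ℕ,
      (∑ s ∈ Finset.Icc r T, ρ ^ (max (t - s) (s - r - t)) * c s) ^ 2 ≤
        K * (1 + r : ℝ) * ∑ s ∈ Finset.Icc r T, ρ ^ (max (t - s) (s - r - t)) * c s ^ 2 := by
    intro t
    set w : ℕ → ℝ := fun s => ρ ^ (max (t - s) (s - r - t)) with hw
    have cs := sum_mul_sq_le_sq_mul_sq (Finset.Icc r T)
      (fun s => Real.sqrt (w s)) (fun s => Real.sqrt (w s) * c s)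
    have e1 : ∀ s ∈ Finset.Icc r T,
        Real.sqrt (w s) * (Real.sqrt (w s) * c s) = w s * c s := by
      intro s _
      rw [← mul_assoc, Real.mul_self_sqrt (hw0 t s)]
    have e2 : ∀ s ∈ Finset.Icc r T, (Real.sqrt (w s)) ^ 2 = w s := by
      intro s _
      exact Real.sq_sqrt (hw0 t s)
    have e3 : ∀ s ∈ Finset.Icc r T, (Real.sqrt (w s) * c s) ^ 2 = w s * c s ^ 2 := by
      intro s _
      rw [mul_pow, Real.sq_sqrt (hw0 t s)]
    rw [Finset.sum_congr rfl e1, Finset.sum_congr rfl e2, Finset.sum_congr rfl e3] at cs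
    refine cs.trans ?_
    have hnn : 0 ≤ ∑ s ∈ Finset.Icc r T, w s * c s ^ 2 :=
      Finset.sum_nonneg fun s _ => mul_nonneg (hw0 t s) (sq_nonneg _)
    exact mul_le_mul_of_nonneg_right (hrow t) hnn
  refine ⟨key, ?_⟩
  have hKr : 0 ≤ K * (1 + r : ℝ) := by positivity
  calc ∑ t ∈ Finset.range (T + 1),
        (∑ s ∈ Finset.Icc r T, ρ ^ (max (t - s) (s - r - t)) * c s) ^ 2
      ≤ ∑ t ∈ Finset.range (T + 1),
          K * (1 + r : ℝ) * ∑ s ∈ Finset.Icc r T, ρ ^ (max (t - s) (s - r - t)) * c s ^ 2 :=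
        Finset.sum_le_sum fun t _ => key t
    _ = K * (1 + r : ℝ) * ∑ t ∈ Finset.range (T + 1),
          ∑ s ∈ Finset.Icc r T, ρ ^ (max (t - s) (s - r - t)) * c s ^ 2 := by
        rw [Finset.mul_sum]
    _ = K * (1 + r : ℝ) * ∑ s ∈ Finset.Icc r T,
          (∑ t ∈ Finset.range (T + 1), ρ ^ (max (t - s) (s - r - t))) * c s ^ 2 := by
        rw [Finset.sum_comm]
        congr 1
        refine Finset.sum_congr rfl fun s _ => ?_
        rw [Finset.sum_mul]
    _ ≤ K * (1 + r : ℝ) * ∑ s ∈ Finset.Icc r T, (K * (1 + r : ℝ)) * c s ^ 2 := by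
        refine mul_le_mul_of_nonneg_left (Finset.sum_le_sum fun s hs => ?_) hKr
        exact mul_le_mul_of_nonneg_right (hcol s (Finset.mem_Icc.mp hs).1) (sq_nonneg _)
    _ = K ^ 2 * (1 + r : ℝ) ^ 2 * ∑ s ∈ Finset.Icc r T, c s ^ 2 := by
        rw [← Finset.mul_sum]; ring
end

section
/- Let (J_u)_{u=0}^T be an inhomogeneous Markov chain on {1,…,N} evolving backward in time with transition matrices Λ_u each satisfying the Doeblin condition Λ_u(i,j) ≥ (1−ρ)·ν_u(j) for probability vectors ν_u. Fix r ≥ 0, points ξ_s^j ∈ X, and a bounded measurable h on X^{r+1}. Let G_u = σ(ξ's) ∨ σ(J_v, u ≤ v ≤ T). Then for r ≤ t ≤ u ≤ T, |E[h(ξ_{t−r}^{J_{t−r}},…,ξ_t^{J_t}) | G_u] − E[h(ξ_{t−r}^{J_{t−r}},…,ξ_t^{J_t}) | G_{u+1}]| ≤ ρ^{u−t}·osc(h) almost surely. -/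
/-! Conditioning on `G_w` leaves the coordinates below `w` distributed as the backward chain
started from `J_w`, so both conditional expectations are values of `F_w(z)`, the expectation of
the window functional when the path is frozen to `z` from index `w` on; moreover `F_{u+1}(z)` is a
`Λ_u(z_{u+1}, ·)`-average of values of `F_u`, so the difference is at most the oscillation of
`F_u`. The window functional only sees coordinates `≤ t`, so for `w ≥ t`, `F_w(z)` depends on
`z_w` alone. Removing the common part `(1 - ρ) ν_w` from two rows of `Λ_w` leaves weights of
mass `ρ`, so every step from `t` to `u` contracts the oscillation by `ρ`, starting from `osc(h)`
at `t`. -/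

open Finset Function

lemma abs_sum_mul_sub_sum_mul_le {ι κ : Type*} [Fintype ι] [Fintype κ] {p : ι → ℝ} {q : κ → ℝ}
    {c D : ℝ} (hp : ∀ i, 0 ≤ p i) (hq : ∀ k, 0 ≤ q k) (hpc : ∑ i, p i = c) (hqc : ∑ k, q k = c)
    {a : ι → ℝ} {b : κ → ℝ} (hab : ∀ i k, |a i - b k| ≤ D) :
    |∑ i, p i * a i - ∑ k, q k * b k| ≤ c * D := by
  obtain rfl | hc := (hpc ▸ sum_nonneg fun i _ => hp i : 0 ≤ c).eq_or_lt
  · have hp0 := (sum_eq_zero_iff_of_nonneg fun i _ => hp i).1 hpc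
    have hq0 := (sum_eq_zero_iff_of_nonneg fun k _ => hq k).1 hqc
    simp [hp0, hq0]
  have hdouble : c * (∑ i, p i * a i - ∑ k, q k * b k) = ∑ i, ∑ k, p i * q k * (a i - b k) := by
    calc c * (∑ i, p i * a i - ∑ k, q k * b k)
        = (∑ i, p i * a i) * ∑ k, q k - (∑ i, p i) * ∑ k, q k * b k := by rw [hpc, hqc]; ring
      _ = ∑ i, ∑ k, p i * q k * (a i - b k) := by
        simp only [sum_mul_sum, ← sum_sub_distrib]
        exact sum_congr rfl fun i _ => sum_congr rfl fun k _ => by ring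
  refine le_of_mul_le_mul_left ?_ hc
  calc c * |∑ i, p i * a i - ∑ k, q k * b k|
      = |∑ i, ∑ k, p i * q k * (a i - b k)| := by rw [← hdouble, abs_mul, abs_of_pos hc]
    _ ≤ ∑ i, ∑ k, p i * q k * D := by
      refine (abs_sum_le_sum_abs _ _).trans (sum_le_sum fun i _ => ?_)
      refine (abs_sum_le_sum_abs _ _).trans (sum_le_sum fun k _ => ?_)
      rw [abs_mul, abs_of_nonneg (mul_nonneg (hp i) (hq k))]
      exact mul_le_mul_of_nonneg_left (hab i k) (mul_nonneg (hp i) (hq k))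
    _ = c * (c * D) := by simp only [← sum_mul, ← mul_sum, hpc, hqc]; ring

lemma abs_sum_mul_sub_sum_mul_le_of_minorized {ι : Type*} [Fintype ι] {p q ν : ι → ℝ} {ρ D : ℝ}
    (hp : ∑ i, p i = 1) (hq : ∑ i, q i = 1) (hν : ∑ i, ν i = 1)
    (hpν : ∀ i, (1 - ρ) * ν i ≤ p i) (hqν : ∀ i, (1 - ρ) * ν i ≤ q i)
    {F : ι → ℝ} (hF : ∀ i k, |F i - F k| ≤ D) :
    |∑ i, p i * F i - ∑ i, q i * F i| ≤ ρ * D := by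
  have hresidual : ∀ r : ι → ℝ, ∑ i, r i = 1 → ∑ i, (r i - (1 - ρ) * ν i) = ρ := fun r hr => by
    rw [sum_sub_distrib, ← mul_sum, hr, hν]; ring
  have hsplit : ∑ i, p i * F i - ∑ i, q i * F i =
      ∑ i, (p i - (1 - ρ) * ν i) * F i - ∑ i, (q i - (1 - ρ) * ν i) * F i := by
    simp only [sub_mul, sum_sub_distrib]; ring
  rw [hsplit]
  exact abs_sum_mul_sub_sum_mul_le (fun i => sub_nonneg.2 (hpν i)) (fun i => sub_nonneg.2 (hqν i))
    (hresidual p hp) (hresidual q hq) hF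

namespace BackwardChain

variable {α : Type*}

def replacePrefix {w : ℕ} (j : Fin w → α) (z : ℕ → α) (m : ℕ) : α :=
  if hm : m < w then j ⟨m, hm⟩ else z m

lemma replacePrefix_snoc {w : ℕ} (j : Fin w → α) (k : α) (z : ℕ → α) :
    replacePrefix (Fin.snoc j k : Fin (w + 1) → α) z = replacePrefix j (update z w k) := by
  funext m
  rcases lt_trichotomy m w with hm | rfl | hm
  · simp [replacePrefix, hm, Nat.lt_succ_of_lt hm, Fin.snoc]
  · simp [replacePrefix, Fin.snoc]
  · simp [replacePrefix, hm.ne', hm.not_gt, (Nat.succ_le_of_lt hm).not_gt]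

lemma replacePrefix_congr {w : ℕ} (j : Fin w → α) {z z' : ℕ → α} (hz : z w = z' w) {m : ℕ}
    (hm : m ≤ w) : replacePrefix j z m = replacePrefix j z' m := by
  rcases hm.lt_or_eq with hm | rfl
  · simp [replacePrefix, hm]
  · simp [replacePrefix, hz]

noncomputable def pathWeight (Λ : ℕ → α → α → ℝ) {w : ℕ} (j : Fin w → α) (z : ℕ → α) : ℝ :=
  ∏ v ∈ range w, Λ v (replacePrefix j z (v + 1)) (replacePrefix j z v)

variable {Λ : ℕ → α → α → ℝ}

lemma pathWeight_nonneg (hΛ : ∀ v i j, 0 ≤ Λ v i j) {w : ℕ} (j : Fin w → α) (z : ℕ → α) :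
    0 ≤ pathWeight Λ j z :=
  prod_nonneg fun v _ => hΛ v _ _

lemma pathWeight_snoc {w : ℕ} (j : Fin w → α) (k : α) (z : ℕ → α) :
    pathWeight Λ (Fin.snoc j k : Fin (w + 1) → α) z =
      pathWeight Λ j (update z w k) * Λ w (z (w + 1)) k := by
  have hlast : ∀ m, w ≤ m → replacePrefix j (update z w k) m = update z w k m := fun m hm => by
    simp [replacePrefix, hm.not_gt]
  rw [pathWeight, replacePrefix_snoc, prod_range_succ, hlast _ le_rfl, hlast _ (Nat.le_succ w),
    update_self, update_of_ne (Nat.succ_ne_self w)]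
  rfl

variable [Fintype α]

/-- The expectation of `φ` along the backward chain started at index `w` in state `z w`, with the
coordinates from `w` on frozen to `z`. -/
noncomputable def backwardExpect (Λ : ℕ → α → α → ℝ) (w : ℕ) (φ : (ℕ → α) → ℝ) (z : ℕ → α) : ℝ :=
  ∑ j : Fin w → α, pathWeight Λ j z * φ (replacePrefix j z)

lemma backwardExpect_succ (w : ℕ) (φ : (ℕ → α) → ℝ) (z : ℕ → α) :
    backwardExpect Λ (w + 1) φ z =
      ∑ k, Λ w (z (w + 1)) k * backwardExpect Λ w φ (update z w k) := by
  rw [backwardExpect, ← (Fin.snocEquiv fun _ => α).sum_comp, Fintype.sum_prod_type]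
  refine sum_congr rfl fun k _ => ?_
  rw [backwardExpect, mul_sum]
  refine sum_congr rfl fun j _ => ?_
  change pathWeight Λ (Fin.snoc j k) z * φ (replacePrefix (Fin.snoc j k) z) = _
  rw [pathWeight_snoc, replacePrefix_snoc]
  ring

lemma sum_pathWeight (hΛ : ∀ v i, ∑ j, Λ v i j = 1) (w : ℕ) (z : ℕ → α) :
    ∑ j : Fin w → α, pathWeight Λ j z = 1 := by
  suffices ∀ z, backwardExpect Λ w (fun _ => 1) z = 1 by simpa [backwardExpect] using this z
  induction w with
  | zero => simp [backwardExpect, pathWeight]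
  | succ w ih => simp [backwardExpect_succ, ih, hΛ]

lemma backwardExpect_congr {w : ℕ} {φ : (ℕ → α) → ℝ} (hφ : DependsOn φ (Set.Iic w))
    {z z' : ℕ → α} (hz : z w = z' w) : backwardExpect Λ w φ z = backwardExpect Λ w φ z' := by
  refine sum_congr rfl fun j _ => ?_
  have hpath : ∀ m ≤ w, replacePrefix j z m = replacePrefix j z' m :=
    fun m hm => replacePrefix_congr j hz hm
  rw [pathWeight, pathWeight, hφ fun m hm => hpath m hm]
  congr 1
  exact prod_congr rfl fun v hv => by
    rw [mem_range] at hv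
    rw [hpath v hv.le, hpath (v + 1) hv]

variable (hΛ : ∀ v i, Λ v i ∈ stdSimplex ℝ α)
include hΛ

lemma abs_backwardExpect_sub_le {φ : (ℕ → α) → ℝ} {D : ℝ} (hφ : ∀ x y, |φ x - φ y| ≤ D)
    (w : ℕ) (z z' : ℕ → α) : |backwardExpect Λ w φ z - backwardExpect Λ w φ z'| ≤ D := by
  have hsum := sum_pathWeight (fun v i => (hΛ v i).2) w
  have hweight := pathWeight_nonneg (fun v i => (hΛ v i).1) (w := w)
  simpa [backwardExpect] using abs_sum_mul_sub_sum_mul_le (hweight · z) (hweight · z')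
    (hsum z) (hsum z') fun _ _ => hφ _ _

lemma abs_backwardExpect_sub_le_pow {ν : ℕ → α → ℝ} (hν : ∀ v, ∑ i, ν v i = 1) {ρ : ℝ} {t w : ℕ}
    (htw : t ≤ w) (hdoeb : ∀ v, t ≤ v → v < w → ∀ i j, (1 - ρ) * ν v j ≤ Λ v i j)
    {φ : (ℕ → α) → ℝ} (hφt : DependsOn φ (Set.Iic t)) {D : ℝ} (hφ : ∀ x y, |φ x - φ y| ≤ D)
    (z z' : ℕ → α) : |backwardExpect Λ w φ z - backwardExpect Λ w φ z'| ≤ ρ ^ (w - t) * D := by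
  induction w, htw using Nat.le_induction generalizing z z' with
  | base => simpa using abs_backwardExpect_sub_le hΛ hφ t z z'
  | succ w htw ih =>
    have hupdate : ∀ k,
        backwardExpect Λ w φ (update z' w k) = backwardExpect Λ w φ (update z w k) :=
      fun k => backwardExpect_congr (hφt.mono (Set.Iic_subset_Iic.2 htw)) (by simp)
    rw [backwardExpect_succ, backwardExpect_succ, Nat.succ_sub htw, pow_succ, mul_comm _ ρ,
      mul_assoc]
    simp_rw [hupdate]
    exact abs_sum_mul_sub_sum_mul_le_of_minorized (hΛ w _).2 (hΛ w _).2 (hν w)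
      (hdoeb w htw w.lt_succ_self _) (hdoeb w htw w.lt_succ_self _)
      fun i k => ih (fun v hv hvw => hdoeb v hv (hvw.trans w.lt_succ_self)) _ _

lemma abs_backwardExpect_sub_backwardExpect_succ_le {φ : (ℕ → α) → ℝ} {D : ℝ} {u : ℕ}
    (hφ : ∀ z z', |backwardExpect Λ u φ z - backwardExpect Λ u φ z'| ≤ D) (z : ℕ → α) :
    |backwardExpect Λ u φ z - backwardExpect Λ (u + 1) φ z| ≤ D := by
  rw [backwardExpect_succ]
  simpa using abs_sum_mul_sub_sum_mul_le (p := fun _ : Unit => 1) (fun _ => zero_le_one)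
    (hΛ u _).1 (by simp) (hΛ u _).2 (a := fun _ => backwardExpect Λ u φ z) fun _ _ => hφ _ _

end BackwardChain

open MeasureTheory ProbabilityTheory BackwardChain

theorem backward_chain_forgetting_general
    {Ω X : Type*} [mΩ : MeasurableSpace Ω] (μ : Measure Ω)
    (N T : ℕ) (ρ : ℝ)
    (Λ : ℕ → Fin N → Fin N → ℝ)
    (hstoch : ∀ v i, (∀ j, 0 ≤ Λ v i j) ∧ ∑ j, Λ v i j = 1)
    (ν : ℕ → Fin N → ℝ)
    (hν : ∀ v, (∀ j, 0 ≤ ν v j) ∧ ∑ j, ν v j = 1)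
    (hdoeb : ∀ v, v ≤ T → ∀ i j, (1 - ρ) * ν v j ≤ Λ v i j)
    (J : ℕ → Ω → Fin N)
    (G : ℕ → MeasurableSpace Ω)
    (hlaw : ∀ w : ℕ, w ≤ T + 1 → ∀ φ : (ℕ → Fin N) → ℝ,
      Measurable φ → (∃ Cφ : ℝ, ∀ z, |φ z| ≤ Cφ) →
      μ[fun ω => φ (fun v => J v ω) | G w] =ᵐ[μ]
        fun ω => ∑ j : Fin w → Fin N,
          (∏ v ∈ Finset.range w,
            Λ v ((fun u : ℕ => if hu : u < w then j ⟨u, hu⟩ else J u ω) (v + 1))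
              ((fun u : ℕ => if hu : u < w then j ⟨u, hu⟩ else J u ω) v)) *
          φ (fun u : ℕ => if hu : u < w then j ⟨u, hu⟩ else J u ω))
    (r t u : ℕ) (hrt : r ≤ t) (htu : t ≤ u) (huT : u ≤ T)
    (ξ : ℕ → Fin N → X) (h : (Fin (r + 1) → X) → ℝ)
    (osc : ℝ) (hosc : ∀ z z', |h z - h z'| ≤ osc) :
    ∀ᵐ ω ∂μ,
      |MeasureTheory.condExp (G u) μ
          (fun ω' => h (fun i => ξ (t - r + i) (J (t - r + i) ω'))) ω -
        MeasureTheory.condExp (G (u + 1)) μ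
          (fun ω' => h (fun i => ξ (t - r + i) (J (t - r + i) ω'))) ω|
      ≤ ρ ^ (u - t) * osc := by
  let g : (Fin (r + 1) → Fin N) → ℝ := fun y => h fun i => ξ (t - r + i) (y i)
  let φ : (ℕ → Fin N) → ℝ := fun z => g fun i => z (t - r + i)
  have hφm : Measurable φ :=
    (measurable_of_countable g).comp (measurable_pi_lambda _ fun i => measurable_pi_apply _)
  have hφb : ∃ C, ∀ z, |φ z| ≤ C := by
    obtain ⟨C, hC⟩ := (Set.finite_range fun y => |g y|).bddAbove
    exact ⟨C, fun z => hC ⟨_, rfl⟩⟩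
  have hφt : DependsOn φ (Set.Iic t) := fun z z' hzz' =>
    congrArg g <| funext fun i => hzz' _ <| by simp only [Set.mem_Iic]; omega
  have hcontract := abs_backwardExpect_sub_le_pow hstoch (fun v => (hν v).2) htu
    (fun v _ hvu => hdoeb v (by omega)) hφt (fun _ _ => hosc _ _)
  -- `backwardExpect` unfolds to the right-hand side of `hlaw`.
  have hu : μ[fun ω => h fun i => ξ (t - r + i) (J (t - r + i) ω) | G u] =ᵐ[μ]
      fun ω => backwardExpect Λ u φ (J · ω) := hlaw u (by omega) φ hφm hφb
  have hu' : μ[fun ω => h fun i => ξ (t - r + i) (J (t - r + i) ω) | G (u + 1)] =ᵐ[μ]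
      fun ω => backwardExpect Λ (u + 1) φ (J · ω) := hlaw (u + 1) (by omega) φ hφm hφb
  filter_upwards [hu, hu'] with ω hω hω'
  rw [hω, hω']
  exact abs_backwardExpect_sub_backwardExpect_succ_le hstoch hcontract _

/-- Backward-in-time inhomogeneous Markov chain with Doeblin-minorized
transitions: successive conditional expectations of a fixed-window functional differ by at
most `ρ^{u−t}·osc(h)`. The backward chain structure is encoded by `hlaw`, which gives the
conditional law of the whole path given `G_w` (coordinates `< w` distributed according to
the product of the backward kernels, started from `J_w`). -/
theorem backward_chain_forgetting
    {Ω X : Type*} [mΩ : MeasurableSpace Ω] (μ : Measure Ω) [IsProbabilityMeasure μ]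
    (N T : ℕ) (hN : 0 < N) (ρ : ℝ) (hρ0 : 0 ≤ ρ) (hρ1 : ρ < 1)
    (Λ : ℕ → Fin N → Fin N → ℝ)
    (hstoch : ∀ v i, (∀ j, 0 ≤ Λ v i j) ∧ ∑ j, Λ v i j = 1)
    (ν : ℕ → Fin N → ℝ)
    (hν : ∀ v, (∀ j, 0 ≤ ν v j) ∧ ∑ j, ν v j = 1)
    (hdoeb : ∀ v, v ≤ T → ∀ i j, (1 - ρ) * ν v j ≤ Λ v i j)
    (J : ℕ → Ω → Fin N) (hJ : ∀ v, Measurable (J v))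
    (G : ℕ → MeasurableSpace Ω) (hG : ∀ u, G u ≤ mΩ) (hanti : Antitone G)
    (hadapt : ∀ u v : ℕ, u ≤ v → Measurable[G u] (J v))
    (hlaw : ∀ w : ℕ, w ≤ T + 1 → ∀ φ : (ℕ → Fin N) → ℝ,
      Measurable φ → (∃ Cφ : ℝ, ∀ z, |φ z| ≤ Cφ) →
      μ[fun ω => φ (fun v => J v ω) | G w] =ᵐ[μ]
        fun ω => ∑ j : Fin w → Fin N,
          (∏ v ∈ Finset.range w,
            Λ v ((fun u : ℕ => if hu : u < w then j ⟨u, hu⟩ else J u ω) (v + 1))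
              ((fun u : ℕ => if hu : u < w then j ⟨u, hu⟩ else J u ω) v)) *
          φ (fun u : ℕ => if hu : u < w then j ⟨u, hu⟩ else J u ω))
    (r t u : ℕ) (hrt : r ≤ t) (htu : t ≤ u) (huT : u ≤ T)
    (ξ : ℕ → Fin N → X) (h : (Fin (r + 1) → X) → ℝ)
    (osc : ℝ) (hosc : ∀ z z', |h z - h z'| ≤ osc) :
    ∀ᵐ ω ∂μ,
      |MeasureTheory.condExp (G u) μ
          (fun ω' => h (fun i => ξ (t - r + i) (J (t - r + i) ω'))) ω -
        MeasureTheory.condExp (G (u + 1)) μ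
          (fun ω' => h (fun i => ξ (t - r + i) (J (t - r + i) ω'))) ω|
      ≤ ρ ^ (u - t) * osc :=
  backward_chain_forgetting_general (mΩ := mΩ) μ N T ρ Λ hstoch ν hν hdoeb J G hlaw r t u hrt htu
    huT ξ h osc hosc
end
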